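/- arXiv:1009.1688 — 3 statements merged into one kernel-verified Lean document; each statement's English description precedes it below -/
import Mathlib

section
/- Let ζ : [0,T₀) → ℝ be differentiable with ζ(t) → -∞ as t → T₀⁻, and suppose there is a constant A ≥ 0 such that -A - 1 < ζ'(t) + ½ζ(t)² < A + 1 for all t. Then the blow-up rate satisfies lim_{t→T₀⁻} (T₀ - t)·ζ(t) = -2. -/
/-!
Put `u = ζ⁻¹`. The Riccati substitution gives `u' = 1/2 - (ζ' + ζ²/2)/ζ²`, and since the
numerator is bounded while `ζ² → ∞`, `u' → 1/2` and `u → 0` as `t → T₀⁻`. Writing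
`(T₀ - t) ζ(t) = (T₀ - t) / u(t)`, L'Hôpital's rule yields the limit `-1 / (1/2) = -2`.
-/

open Set Filter Topology

theorem tendsto_div_sq_nhds_zero_of_tendsto_atBot {α : Type*} {l : Filter α} {r z : α → ℝ}
    {C : ℝ} (hr : ∀ᶠ x in l, |r x| ≤ C) (hz : Tendsto z l atBot) :
    Tendsto (fun x => r x / z x ^ 2) l (𝓝 0) := by
  have hsq : Tendsto (fun x => z x ^ 2) l atTop := by
    simpa only [sq] using hz.atBot_mul_atBot₀ hz
  simpa [div_eq_mul_inv, mul_comm] using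
    (tendsto_inv_atTop_zero.comp hsq).zero_mul_isBoundedUnder_le (isBoundedUnder_of_eventually_le hr)

theorem HasDerivAt.inv_of_riccati {ζ : ℝ → ℝ} {ζ' t : ℝ} (h : HasDerivAt ζ ζ' t) (ht : ζ t ≠ 0) :
    HasDerivAt (fun s => (ζ s)⁻¹) (1 / 2 - (ζ' + 1 / 2 * ζ t ^ 2) / ζ t ^ 2) t := by
  rw [show 1 / 2 - (ζ' + 1 / 2 * ζ t ^ 2) / ζ t ^ 2 = -ζ' / ζ t ^ 2 by field_simp; ring]
  exact h.inv ht

theorem tendsto_sub_mul_nhdsLT_of_riccati {ζ ζ' : ℝ → ℝ} {b : ℝ}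
    (hderiv : ∀ᶠ t in 𝓝[<] b, HasDerivAt ζ (ζ' t) t)
    (hres : Tendsto (fun t => (ζ' t + 1 / 2 * ζ t ^ 2) / ζ t ^ 2) (𝓝[<] b) (𝓝 0))
    (hblow : Tendsto ζ (𝓝[<] b) atBot) :
    Tendsto (fun t => (b - t) * ζ t) (𝓝[<] b) (𝓝 (-2)) := by
  have hu' : Tendsto (fun t => 1 / 2 - (ζ' t + 1 / 2 * ζ t ^ 2) / ζ t ^ 2) (𝓝[<] b)
      (𝓝 (1 / 2)) := by
    simpa using hres.const_sub (1 / 2 : ℝ)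
  have hlim := HasDerivAt.lhopital_zero_nhdsLT (f := fun t => b - t) (f' := fun _ => -1)
    (Eventually.of_forall fun t => by simpa using (hasDerivAt_id t).const_sub b)
    (by filter_upwards [hderiv, hblow.eventually_ne_atBot 0] with t h ht using h.inv_of_riccati ht)
    (hu'.eventually_ne (by norm_num))
    (tendsto_nhdsWithin_of_tendsto_nhds ((continuous_sub_left b).tendsto' b 0 (sub_self b)))
    hblow.inv_tendsto_atBot
    (tendsto_const_nhds.div hu' (by norm_num))
  norm_num [div_inv_eq_mul] at hlim
  exact hlim

theorem riccati_blowup_rate_general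
    (T₀ A : ℝ) (ζ ζ' : ℝ → ℝ)
    (hT : 0 < T₀)
    (hderiv : ∀ t ∈ Set.Ico (0:ℝ) T₀, HasDerivAt ζ (ζ' t) t)
    (hbound : ∀ t ∈ Set.Ico (0:ℝ) T₀,
      -A - 1 < ζ' t + (1/2) * (ζ t)^2 ∧ ζ' t + (1/2) * (ζ t)^2 < A + 1)
    (hblow : Tendsto ζ (𝓝[Set.Ico (0:ℝ) T₀] T₀) atBot) :
    Tendsto (fun t => (T₀ - t) * ζ t) (𝓝[Set.Ico (0:ℝ) T₀] T₀) (𝓝 (-2)) := by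
  have hres := tendsto_div_sq_nhds_zero_of_tendsto_atBot (C := A + 1)
    (eventually_nhdsWithin_of_forall fun t ht =>
      (abs_lt.mpr ⟨by linarith [(hbound t ht).1], (hbound t ht).2⟩).le) hblow
  have hderiv' : ∀ᶠ t in 𝓝[Ico 0 T₀] T₀, HasDerivAt ζ (ζ' t) t :=
    eventually_nhdsWithin_of_forall hderiv
  rw [nhdsWithin_Ico_eq_nhdsLT hT] at hres hderiv' hblow ⊢
  exact tendsto_sub_mul_nhdsLT_of_riccati hderiv' hres hblow

/-- Blow-up rate: if `ζ` is differentiable on `[0, T₀)`, tends to `-∞` as `t → T₀⁻`, and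
`-A - 1 < ζ'(t) + ½ζ(t)² < A + 1` for some constant `A ≥ 0`, then
`(T₀ - t) · ζ(t) → -2` as `t → T₀⁻`. -/
theorem riccati_blowup_rate
    (T₀ A : ℝ) (ζ ζ' : ℝ → ℝ)
    (hT : 0 < T₀) (hA : 0 ≤ A)
    (hderiv : ∀ t ∈ Set.Ico (0:ℝ) T₀, HasDerivAt ζ (ζ' t) t)
    (hbound : ∀ t ∈ Set.Ico (0:ℝ) T₀,
      -A - 1 < ζ' t + (1/2) * (ζ t)^2 ∧ ζ' t + (1/2) * (ζ t)^2 < A + 1)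
    (hblow : Tendsto ζ (𝓝[Set.Ico (0:ℝ) T₀] T₀) atBot) :
    Tendsto (fun t => (T₀ - t) * ζ t) (𝓝[Set.Ico (0:ℝ) T₀] T₀) (𝓝 (-2)) :=
  riccati_blowup_rate_general T₀ A ζ ζ' hT hderiv hbound hblow
end

section
/- Let M, γ : [0,T) → ℝ be differentiable functions satisfying M'(t) = -½M(t)² + (κ/2)γ(t)² + a and γ'(t) = -M(t)γ(t), where κ > 0 and a ∈ ℝ are constants and γ(0) > 0. Then γ(t) > 0 for all t ∈ [0,T), and the function w(t) := κγ(0)γ(t) + (γ(0)/γ(t))(1 + M(t)²) satisfies w'(t) = (1 + 2a)(γ(0)/γ(t))M(t). -/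
/-!
Along a solution, `γ(t) · exp(∫₀ᵗ M)` is constant, so `γ` keeps the sign of `γ(0)`.
In `w'`, the term `κγ(0)γ' = -κγ(0)Mγ` cancels the contribution of `(κ/2)γ²` to `(M²)'`,
and the cubic terms `±γ(0)M³/γ` coming from `(γ(0)/γ)'` and `(M²)'` cancel as well.
-/

open Set Real

theorem hasDerivWithinAt_integral_Ici_of_continuousOn {g : ℝ → ℝ} {a b x : ℝ}
    (hg : ContinuousOn g (Icc a b)) (hx : x ∈ Ico a b) :
    HasDerivWithinAt (fun s => ∫ y in a..s, g y) (g x) (Ici x) x := by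
  have hint : IntervalIntegrable g MeasureTheory.volume a x :=
    (hg.mono (Icc_subset_Icc_right hx.2.le)).intervalIntegrable_of_Icc hx.1
  have hmeas : StronglyMeasurableAtFilter g (nhdsWithin x (Ioi x)) :=
    ⟨Icc a b, Icc_mem_nhdsGT_of_mem hx, hg.aestronglyMeasurable measurableSet_Icc⟩
  exact intervalIntegral.integral_hasDerivWithinAt_right hint hmeas
    ((hg x (Ico_subset_Icc_self hx)).mono_of_mem_nhdsWithin (Icc_mem_nhdsGT_of_mem hx))

theorem eq_mul_exp_integral_of_hasDerivAt {f g : ℝ → ℝ} {a b : ℝ} (hab : a ≤ b)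
    (hf : ∀ x ∈ Icc a b, HasDerivAt f (g x * f x) x) (hg : ContinuousOn g (Icc a b)) :
    f b = f a * exp (∫ x in a..b, g x) := by
  set F : ℝ → ℝ := fun s => ∫ y in a..s, g y
  have hF_cont : ContinuousOn F (Icc a b) := by
    rw [← uIcc_of_le hab] at hg ⊢
    exact intervalIntegral.continuousOn_primitive_interval (hg.integrableOn_compact isCompact_uIcc)
  have hφ_cont : ContinuousOn (fun s => f s * exp (-F s)) (Icc a b) :=
    ContinuousOn.mul (fun s hs => (hf s hs).continuousAt.continuousWithinAt)
      (continuous_exp.comp_continuousOn hF_cont.neg)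
  have hφ_deriv : ∀ x ∈ Ico a b,
      HasDerivWithinAt (fun s => f s * exp (-F s)) 0 (Ici x) x := by
    intro x hx
    have hFx := hasDerivWithinAt_integral_Ici_of_continuousOn hg hx
    refine ((hf x (Ico_subset_Icc_self hx)).hasDerivWithinAt.mul hFx.neg.exp).congr_deriv ?_
    simp only [Pi.neg_apply]
    ring
  have hφ := constant_of_has_deriv_right_zero hφ_cont hφ_deriv b (right_mem_Icc.mpr hab)
  simp only [F, intervalIntegral.integral_same, neg_zero, exp_zero, mul_one] at hφ
  rw [← hφ, mul_assoc, ← exp_add, neg_add_cancel, exp_zero, mul_one]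

theorem hasDerivAt_auxiliary_function (κ a c : ℝ) {M γ : ℝ → ℝ} {t : ℝ}
    (hM : HasDerivAt M (-(1/2) * (M t)^2 + (κ/2) * (γ t)^2 + a) t)
    (hγ : HasDerivAt γ (-(M t) * γ t) t) (hγt : γ t ≠ 0) :
    HasDerivAt (fun s => κ * c * γ s + (c / γ s) * (1 + (M s)^2))
      ((1 + 2 * a) * (c / γ t) * M t) t := by
  refine ((hγ.const_mul (κ * c)).add
    (((hasDerivAt_const t c).div hγ hγt).mul ((hM.pow 2).const_add 1))).congr_deriv ?_
  simp only [Pi.div_apply, Pi.pow_apply]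
  field_simp
  ring

theorem auxiliary_function_evolution_general
    (T κ a : ℝ) (M γ : ℝ → ℝ)
    (hγ0 : 0 < γ 0)
    (hM : ∀ t ∈ Set.Ico (0:ℝ) T,
      HasDerivAt M (-(1/2) * (M t)^2 + (κ/2) * (γ t)^2 + a) t)
    (hγ : ∀ t ∈ Set.Ico (0:ℝ) T, HasDerivAt γ (-(M t) * γ t) t) :
    (∀ t ∈ Set.Ico (0:ℝ) T, 0 < γ t) ∧
    ∀ t ∈ Set.Ico (0:ℝ) T,
      HasDerivAt (fun s => κ * γ 0 * γ s + (γ 0 / γ s) * (1 + (M s)^2))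
        ((1 + 2 * a) * (γ 0 / γ t) * M t) t := by
  have hpos : ∀ t ∈ Ico (0:ℝ) T, 0 < γ t := by
    rintro t ⟨ht0, htT⟩
    have hsub : Icc 0 t ⊆ Ico 0 T := Icc_subset_Ico_right htT
    have hM_cont : ContinuousOn (fun s => -M s) (Icc 0 t) := fun s hs =>
      (hM s (hsub hs)).continuousAt.neg.continuousWithinAt
    rw [eq_mul_exp_integral_of_hasDerivAt ht0 (fun s hs => hγ s (hsub hs)) hM_cont]
    positivity
  exact ⟨hpos, fun t ht =>
    hasDerivAt_auxiliary_function κ a (γ 0) (hM t ht) (hγ t ht) (hpos t ht).ne'⟩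

/-- For the ODE system `M' = -½M² + (κ/2)γ² + a`, `γ' = -Mγ` with `κ > 0` and
`γ(0) > 0`, one has `γ(t) > 0` throughout, and the auxiliary function
`w(t) = κγ(0)γ(t) + (γ(0)/γ(t))(1 + M(t)²)` satisfies
`w'(t) = (1 + 2a)(γ(0)/γ(t))M(t)`. -/
theorem auxiliary_function_evolution
    (T κ a : ℝ) (M γ : ℝ → ℝ)
    (hκ : 0 < κ) (hγ0 : 0 < γ 0)
    (hM : ∀ t ∈ Set.Ico (0:ℝ) T,
      HasDerivAt M (-(1/2) * (M t)^2 + (κ/2) * (γ t)^2 + a) t)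
    (hγ : ∀ t ∈ Set.Ico (0:ℝ) T, HasDerivAt γ (-(M t) * γ t) t) :
    (∀ t ∈ Set.Ico (0:ℝ) T, 0 < γ t) ∧
    ∀ t ∈ Set.Ico (0:ℝ) T,
      HasDerivAt (fun s => κ * γ 0 * γ s + (γ 0 / γ s) * (1 + (M s)^2))
        ((1 + 2 * a) * (γ 0 / γ t) * M t) t :=
  auxiliary_function_evolution_general T κ a M γ hγ0 hM hγ
end

section
/- Under the setup M' = -½M² + (κ/2)γ² + a, γ' = -Mγ with κ > 0, γ(0) > 0, the bound w(t) ≤ w(0)e^{(1+2|a|)t} on w = κγ(0)γ + (γ(0)/γ)(1+M²) implies pointwise bounds: |M(t)| and γ(t) are bounded on [0,T] by a constant depending only on κ, a, T, γ(0), and M(0). In particular neither M nor γ can blow up in finite time. -/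
open Set

/-!
Both terms of `w` are nonnegative, so `w(t) ≤ W := w(0)e^{(1+2|a|)T}` bounds each of them:
the first gives `γ(t) ≤ W / (κγ(0))`, the second `1 + M(t)² ≤ Wγ(t)/γ(0) ≤ W² / (κγ(0)²)`,
and `|M| ≤ 1 + M²`.
-/

/-- The auxiliary function `w = κγ(0)γ + (γ(0)/γ)(1 + M²)`, with `g` standing for `γ(0)`. -/
noncomputable def auxEnergy (κ g γ M : ℝ) : ℝ := κ * g * γ + g / γ * (1 + M ^ 2)

section auxEnergy

variable {κ g γ M W : ℝ}

lemma auxEnergy_pos (hκ : 0 < κ) (hg : 0 < g) (hγ : 0 < γ) : 0 < auxEnergy κ g γ M := by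
  unfold auxEnergy; positivity

lemma le_div_of_auxEnergy_le (hκ : 0 < κ) (hg : 0 < g) (hγ : 0 < γ)
    (hW : auxEnergy κ g γ M ≤ W) : γ ≤ W / (κ * g) := by
  have : 0 ≤ g / γ * (1 + M ^ 2) := by positivity
  rw [le_div_iff₀ (by positivity)]
  unfold auxEnergy at hW
  linarith

lemma one_add_sq_le_of_auxEnergy_le (hκ : 0 < κ) (hg : 0 < g) (hγ : 0 < γ)
    (hW : auxEnergy κ g γ M ≤ W) : 1 + M ^ 2 ≤ W * γ / g := by
  have : 0 ≤ κ * g * γ := by positivity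
  have h : g / γ * (1 + M ^ 2) ≤ W := by unfold auxEnergy at hW; linarith
  rw [div_mul_eq_mul_div, div_le_iff₀ hγ] at h
  rw [le_div_iff₀ hg]
  linarith

lemma abs_le_of_auxEnergy_le (hκ : 0 < κ) (hg : 0 < g) (hγ : 0 < γ)
    (hW : auxEnergy κ g γ M ≤ W) : |M| ≤ W ^ 2 / (κ * g ^ 2) :=
  calc |M| ≤ 1 + M ^ 2 := by nlinarith [sq_abs M, sq_nonneg (|M| - 1)]
    _ ≤ W * γ / g := one_add_sq_le_of_auxEnergy_le hκ hg hγ hW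
    _ ≤ W * (W / (κ * g)) / g := by
        have : 0 ≤ W := (auxEnergy_pos hκ hg hγ).le.trans hW
        gcongr
        exact le_div_of_auxEnergy_le hκ hg hγ hW
    _ = W ^ 2 / (κ * g ^ 2) := by field_simp

end auxEnergy

noncomputable def auxEnergyBound (κ a T g m : ℝ) : ℝ :=
  auxEnergy κ g g m * Real.exp ((1 + 2 * |a|) * T)

lemma auxEnergy_le_auxEnergyBound {κ a T t g m γ M : ℝ} (hκ : 0 < κ) (hg : 0 < g)
    (htT : t ≤ T) (hw : auxEnergy κ g γ M ≤ auxEnergy κ g g m * Real.exp ((1 + 2 * |a|) * t)) :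
    auxEnergy κ g γ M ≤ auxEnergyBound κ a T g m := by
  refine hw.trans ?_
  have := auxEnergy_pos (M := m) hκ hg hg
  unfold auxEnergyBound
  gcongr

/-- Under `M' = -½M² + (κ/2)γ² + a`, `γ' = -Mγ` with `κ > 0`, `γ(0) > 0`, the bound
`w(t) ≤ w(0)e^{(1+2|a|)t}` on `w = κγ(0)γ + (γ(0)/γ)(1+M²)` yields pointwise bounds:
`|M(t)|` and `γ(t)` are bounded on `[0,T)` by a constant depending only on
`κ, a, T, γ(0), M(0)`. In particular neither `M` nor `γ` blows up in finite time. -/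
theorem no_blowup_from_auxiliary_bound :
    ∃ C : ℝ → ℝ → ℝ → ℝ → ℝ → ℝ,
      ∀ (κ a T : ℝ) (M γ : ℝ → ℝ),
        0 < κ → 0 < γ 0 →
        (∀ t ∈ Set.Ico (0:ℝ) T,
          HasDerivAt M (-(1/2) * (M t)^2 + (κ/2) * (γ t)^2 + a) t) →
        (∀ t ∈ Set.Ico (0:ℝ) T, HasDerivAt γ (-(M t) * γ t) t) →
        (∀ t ∈ Set.Ico (0:ℝ) T, 0 < γ t) →
        (∀ t ∈ Set.Ico (0:ℝ) T,
          κ * γ 0 * γ t + (γ 0 / γ t) * (1 + (M t)^2)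
            ≤ (κ * γ 0 * γ 0 + (γ 0 / γ 0) * (1 + (M 0)^2))
              * Real.exp ((1 + 2 * |a|) * t)) →
        ∀ t ∈ Set.Ico (0:ℝ) T,
          |M t| ≤ C κ a T (γ 0) (M 0) ∧ γ t ≤ C κ a T (γ 0) (M 0) := by
  refine ⟨fun κ a T g m => max (auxEnergyBound κ a T g m ^ 2 / (κ * g ^ 2))
    (auxEnergyBound κ a T g m / (κ * g)), ?_⟩
  intro κ a T M γ hκ hg _ _ hγ hw t ht
  have hW := auxEnergy_le_auxEnergyBound hκ hg ht.2.le (hw t ht)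
  exact ⟨(abs_le_of_auxEnergy_le hκ hg (hγ t ht) hW).trans (le_max_left _ _),
    (le_div_of_auxEnergy_le hκ hg (hγ t ht) hW).trans (le_max_right _ _)⟩
end
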